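/- For every integer d ≥ 2, (1/π)·∫_{−π}^{π} |φ|·u_d(φ) dφ ≤ π²/(2(d+2)). -/

import Mathlib

open Real

/-- The Jackson damping factor `ρ_{j,d}`. -/
noncomputable def jacksonDamp (d j : ℕ) : ℝ :=
  Real.sin ((j + 1) * (π / (d + 2))) / ((d + 2) * Real.sin (π / (d + 2)))
    + (1 - (j + 1) / (d + 2)) * Real.cos (j * (π / (d + 2)))

/-- The Jackson kernel `u_d(φ) = 1/2 + Σ_{j=1}^d ρ_{j,d} cos(jφ)`. -/
noncomputable def jacksonKernel (d : ℕ) (φ : ℝ) : ℝ :=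
  1 / 2 + ∑ j ∈ Finset.Icc 1 d, jacksonDamp d j * Real.cos (j * φ)

open Finset

/-!
With `c k = sin ((k + 1) π / (d + 2))`, the kernel is an autocorrelation:
`(d + 2) u_d(φ) = |∑_{k ≤ d} c k e^{ikφ}|²`, so `u_d ≥ 0`; by orthogonality `∫ u_d = π` and
`∫ cos φ · u_d = π cos (π / (d + 2))`. On `[-π, π]`, Jordan's inequality `|φ| ≤ π sin (|φ| / 2)`
and the tangent-line bound `t ≤ t² / (2s) + s / 2` give `|φ| ≤ π (1 - cos φ) / (4s) + π s / 2`.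
Integrating against `u_d ≥ 0` with `s = sin (π / (2 (d + 2)))` bounds `∫ |φ| u_d` by
`π² s ≤ π³ / (2 (d + 2))`.
-/

theorem sum_range_sum_range_eq_of_symm {M : Type*} [AddCommMonoid M] (g : ℕ → ℕ → M)
    (hg : ∀ k l, g k l = g l k) (n : ℕ) :
    ∑ k ∈ range n, ∑ l ∈ range n, g k l =
      ∑ k ∈ range n, g k k + 2 • ∑ j ∈ Ico 1 n, ∑ l ∈ range (n - j), g (l + j) l := by
  induction n with
  | zero => simp
  | succ n ih =>
    have new_row : ∑ j ∈ Ico 1 (n + 1), ∑ l ∈ range (n + 1 - j), g (l + j) l =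
        ∑ j ∈ Ico 1 n, ∑ l ∈ range (n - j), g (l + j) l + ∑ l ∈ range n, g n l := by
      rcases Nat.eq_zero_or_pos n with rfl | hn
      · simp
      have hsplit : ∀ j ∈ Ico 1 (n + 1), ∑ l ∈ range (n + 1 - j), g (l + j) l =
          ∑ l ∈ range (n - j), g (l + j) l + g n (n - j) := by
        intro j hj
        rw [mem_Ico] at hj
        rw [show n + 1 - j = n - j + 1 by omega, sum_range_succ, Nat.sub_add_cancel (by omega)]
      have hreflect : ∑ j ∈ Ico 1 (n + 1), g n (n - j) = ∑ l ∈ range n, g n l := by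
        rw [sum_Ico_eq_sum_range, ← sum_range_reflect]
        exact sum_congr rfl fun l hl => by rw [mem_range] at hl; congr 2; omega
      rw [sum_congr rfl hsplit, sum_add_distrib, hreflect, sum_Ico_succ_top hn, Nat.sub_self,
        sum_range_zero, add_zero]
    have hcol : ∑ k ∈ range n, g k n = ∑ l ∈ range n, g n l := sum_congr rfl fun k _ => hg k n
    simp only [sum_range_succ, sum_add_distrib, hcol, new_row, ih, smul_add, two_nsmul]
    abel

theorem sq_sum_mul_cos_add_sq_sum_mul_sin (c : ℕ → ℝ) (n : ℕ) (φ : ℝ) :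
    (∑ k ∈ range n, c k * cos (k * φ)) ^ 2 + (∑ k ∈ range n, c k * sin (k * φ)) ^ 2 =
      ∑ k ∈ range n, c k ^ 2 +
        2 * ∑ j ∈ Ico 1 n, (∑ l ∈ range (n - j), c (l + j) * c l) * cos (j * φ) := by
  have hexpand : (∑ k ∈ range n, c k * cos (k * φ)) ^ 2 + (∑ k ∈ range n, c k * sin (k * φ)) ^ 2 =
      ∑ k ∈ range n, ∑ l ∈ range n, c k * c l * cos ((k - l : ℝ) * φ) := by
    simp only [sq, sum_mul_sum, ← sum_add_distrib, sub_mul, cos_sub]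
    exact sum_congr rfl fun k _ => sum_congr rfl fun l _ => by ring
  rw [hexpand, sum_range_sum_range_eq_of_symm _
    (fun k l => by rw [mul_comm (c k), ← cos_neg, ← neg_mul, neg_sub]), nsmul_eq_mul]
  simp only [sub_self, zero_mul, cos_zero, mul_one, sq, sum_mul, Nat.cast_add, Nat.cast_ofNat,
    add_sub_cancel_left]

theorem sin_pi_div_natCast_add_two_pos (d : ℕ) : 0 < sin (π / (d + 2)) :=
  sin_pos_of_pos_of_lt_pi (by positivity)
    (div_lt_self pi_pos (by linarith [d.cast_nonneg (α := ℝ)]))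

theorem jacksonDamp_zero (d : ℕ) : jacksonDamp d 0 = 1 := by
  have := (sin_pi_div_natCast_add_two_pos d).ne'
  simp only [jacksonDamp, CharP.cast_eq_zero, zero_add, one_mul, zero_mul, cos_zero, mul_one]
  field_simp
  ring

theorem jacksonDamp_one (d : ℕ) : jacksonDamp d 1 = cos (π / (d + 2)) := by
  have := (sin_pi_div_natCast_add_two_pos d).ne'
  simp only [jacksonDamp, Nat.cast_one, one_add_one_eq_two, sin_two_mul]
  field_simp
  ring

theorem sum_range_sin_mul_sin_eq_jacksonDamp (d j : ℕ) (hj : j ≤ d) :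
    ∑ l ∈ range (d + 1 - j), sin ((l + j + 1) * (π / (d + 2))) * sin ((l + 1) * (π / (d + 2))) =
      (d + 2) / 2 * jacksonDamp d j := by
  have hsinA := (sin_pi_div_natCast_add_two_pos d).ne'
  set A := π / (d + 2) with hA
  have hπ : (d + 2) * A = π := by rw [hA]; field_simp
  have hlen : ((d + 1 - j : ℕ) : ℝ) = d + 1 - j := by push_cast [show j ≤ d + 1 by omega]; ring
  have hcos : sin A * ∑ l ∈ range (d + 1 - j), cos (2 * A * l + (j + 2) * A) =
      -sin ((j + 1) * A) := by
    have h := sin_mul_sum_cos (d + 1 - j) (2 * A) ((j + 2) * A)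
    rw [hlen, show 2 * A / 2 = A by ring,
      show ((d : ℝ) + 1 - j - 1) * (2 * A) / 2 + (j + 2) * A = π by linear_combination hπ,
      show ((d : ℝ) + 1 - j) * (2 * A) / 2 = π - (j + 1) * A by linear_combination hπ,
      sin_pi_sub, cos_pi] at h
    linarith
  have hprod : ∀ l ∈ range (d + 1 - j), sin ((l + j + 1) * A) * sin ((l + 1) * A) =
      (cos (j * A) - cos (2 * A * l + (j + 2) * A)) / 2 := by
    intro l _
    have h := two_mul_sin_mul_sin ((l + j + 1) * A) ((l + 1) * A)
    rw [show (l + j + 1) * A - (l + 1) * A = j * A by ring,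
      show (l + j + 1) * A + (l + 1) * A = 2 * A * l + (j + 2) * A by ring] at h
    linarith
  rw [sum_congr rfl hprod, ← sum_div, sum_sub_distrib, sum_const, card_range, nsmul_eq_mul, hlen,
    eq_div_of_mul_eq hsinA ((mul_comm _ _).trans hcos), jacksonDamp, ← hA]
  field_simp
  ring

theorem natCast_add_two_mul_jacksonKernel (d : ℕ) (φ : ℝ) :
    (d + 2) * jacksonKernel d φ =
      (∑ k ∈ range (d + 1), sin ((k + 1) * (π / (d + 2))) * cos (k * φ)) ^ 2 +
        (∑ k ∈ range (d + 1), sin ((k + 1) * (π / (d + 2))) * sin (k * φ)) ^ 2 := by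
  rw [sq_sum_mul_cos_add_sq_sum_mul_sin (fun k : ℕ => sin ((k + 1) * (π / (d + 2)))),
    Ico_add_one_right_eq_Icc]
  have hdiag := sum_range_sin_mul_sin_eq_jacksonDamp d 0 (Nat.zero_le d)
  have hlag : ∀ j ∈ Icc 1 d, (∑ l ∈ range (d + 1 - j),
      sin (((l + j : ℕ) + 1) * (π / (d + 2))) * sin ((l + 1) * (π / (d + 2)))) * cos (j * φ) =
        (d + 2) / 2 * (jacksonDamp d j * cos (j * φ)) := fun j hj => by
    push_cast
    rw [sum_range_sin_mul_sin_eq_jacksonDamp d j (mem_Icc.mp hj).2, mul_assoc]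
  simp only [Nat.sub_zero, Nat.cast_zero, add_zero, jacksonDamp_zero, mul_one, ← sq] at hdiag
  rw [hdiag, sum_congr rfl hlag, ← mul_sum, jacksonKernel]
  ring

theorem jacksonKernel_nonneg (d : ℕ) (φ : ℝ) : 0 ≤ jacksonKernel d φ :=
  nonneg_of_mul_nonneg_right ((natCast_add_two_mul_jacksonKernel d φ).symm ▸ by positivity)
    (by positivity : (0 : ℝ) < d + 2)

@[fun_prop]
theorem continuous_jacksonKernel (d : ℕ) : Continuous (jacksonKernel d) := by
  unfold jacksonKernel
  fun_prop

theorem integral_cos_intCast_mul (m : ℤ) :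
    ∫ x in -π..π, cos (m * x) = if m = 0 then 2 * π else 0 := by
  split_ifs with hm
  · simp [hm, two_mul]
  · have hm' : (m : ℝ) ≠ 0 := Int.cast_ne_zero.mpr hm
    rw [intervalIntegral.integral_comp_mul_left (fun x => cos x) hm', integral_cos, mul_neg,
      sin_neg, sin_int_mul_pi]
    simp

theorem integral_cos_natCast_mul_mul_cos (m j : ℕ) (hm : m ≠ 0) :
    ∫ x in -π..π, cos (m * x) * cos (j * x) = if j = m then π else 0 := by
  have hprod : ∀ x : ℝ, cos (m * x) * cos (j * x) =
      (cos (((j - m : ℤ) : ℝ) * x) + cos (((j + m : ℤ) : ℝ) * x)) / 2 := fun x => by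
    push_cast
    rw [sub_mul, add_mul, ← two_mul_cos_mul_cos]
    ring
  simp_rw [hprod]
  rw [intervalIntegral.integral_div, intervalIntegral.integral_add
    (Continuous.intervalIntegrable (by fun_prop) _ _)
    (Continuous.intervalIntegrable (by fun_prop) _ _),
    integral_cos_intCast_mul, integral_cos_intCast_mul]
  split_ifs <;> first | omega | ring

theorem integral_sum_mul_cos (s : Finset ℕ) (hs : 0 ∉ s) (b : ℕ → ℝ) :
    ∫ x in -π..π, ∑ j ∈ s, b j * cos (j * x) = 0 := by
  rw [intervalIntegral.integral_finsetSum fun j _ =>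
    Continuous.intervalIntegrable (by fun_prop) _ _]
  refine sum_eq_zero fun j hj => ?_
  have h := integral_cos_intCast_mul j
  simp only [Int.cast_natCast, Nat.cast_eq_zero] at h
  rw [intervalIntegral.integral_const_mul, h, if_neg (ne_of_mem_of_not_mem hj hs), mul_zero]

theorem integral_cos_mul_sum_mul_cos (m : ℕ) (hm : m ≠ 0) (s : Finset ℕ) (b : ℕ → ℝ) :
    ∫ x in -π..π, cos (m * x) * ∑ j ∈ s, b j * cos (j * x) = if m ∈ s then b m * π else 0 := by
  simp_rw [mul_sum, mul_left_comm (cos _)]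
  rw [intervalIntegral.integral_finsetSum fun j _ =>
    Continuous.intervalIntegrable (by fun_prop) _ _]
  simp_rw [intervalIntegral.integral_const_mul, integral_cos_natCast_mul_mul_cos m _ hm, mul_ite,
    mul_zero, sum_ite_eq']

theorem integral_jacksonKernel (d : ℕ) : ∫ φ in -π..π, jacksonKernel d φ = π := by
  unfold jacksonKernel
  rw [intervalIntegral.integral_add intervalIntegrable_const
    (Continuous.intervalIntegrable (by fun_prop) _ _), integral_sum_mul_cos _ (by simp)]
  simp only [intervalIntegral.integral_const, smul_eq_mul, add_zero]
  ring

theorem integral_cos_mul_jacksonKernel (d : ℕ) :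
    ∫ φ in -π..π, cos φ * jacksonKernel d φ = π * cos (π / (d + 2)) := by
  have h := integral_cos_mul_sum_mul_cos 1 one_ne_zero (Icc 1 d) (jacksonDamp d)
  simp only [Nat.cast_one, one_mul] at h
  unfold jacksonKernel
  simp_rw [mul_add]
  rw [intervalIntegral.integral_add (Continuous.intervalIntegrable (by fun_prop) _ _)
    (Continuous.intervalIntegrable (by fun_prop) _ _), h, intervalIntegral.integral_mul_const,
    integral_cos, sin_neg, sin_pi, neg_zero, sub_zero, zero_mul, zero_add]
  split_ifs with hd
  · rw [jacksonDamp_one, mul_comm]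
  · obtain rfl : d = 0 := by simpa using hd
    simp

theorem integral_one_sub_cos_mul_jacksonKernel (d : ℕ) :
    ∫ φ in -π..π, (1 - cos φ) * jacksonKernel d φ = 2 * π * sin (π / (d + 2) / 2) ^ 2 := by
  have hcos : cos (π / (d + 2)) = 1 - 2 * sin (π / (d + 2) / 2) ^ 2 := by
    rw [← cos_two_mul_eq_one_sub, mul_div_cancel₀ _ two_ne_zero]
  simp_rw [sub_mul, one_mul]
  rw [intervalIntegral.integral_sub ((continuous_jacksonKernel d).intervalIntegrable _ _)
    (Continuous.intervalIntegrable (by fun_prop) _ _), integral_jacksonKernel,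
    integral_cos_mul_jacksonKernel, hcos]
  ring

theorem abs_le_pi_div_mul_one_sub_cos_add {x s : ℝ} (hx : |x| ≤ π) (hs : 0 < s) :
    |x| ≤ π / (4 * s) * (1 - cos x) + π * s / 2 := by
  set t := sin (|x| / 2)
  have hjordan : |x| ≤ π * t := by
    have h := mul_le_sin (x := |x| / 2) (by positivity) (by linarith)
    calc |x| = π * (2 / π * (|x| / 2)) := by field_simp
      _ ≤ π * t := by gcongr
  have hsq : t ^ 2 = (1 - cos x) / 2 := by
    rw [sin_sq_eq_half_sub, mul_div_cancel₀ _ two_ne_zero, cos_abs]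
    ring
  have htangent : t ≤ t ^ 2 / (2 * s) + s / 2 := by
    have : t ^ 2 / (2 * s) + s / 2 - t = (t - s) ^ 2 / (2 * s) := by field_simp; ring
    linarith [div_nonneg (sq_nonneg (t - s)) (by positivity : (0 : ℝ) ≤ 2 * s)]
  calc |x| ≤ π * t := hjordan
    _ ≤ π * (t ^ 2 / (2 * s) + s / 2) := by gcongr
    _ = π / (4 * s) * (1 - cos x) + π * s / 2 := by rw [hsq]; field_simp; ring

theorem jacksonKernel_first_moment_general (d : ℕ) :
    (1 / π) * ∫ φ in (-π)..π, |φ| * jacksonKernel d φ ≤ π ^ 2 / (2 * (d + 2)) := by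
  set s := sin (π / (d + 2) / 2) with hsdef
  have hs : 0 < s := sin_pos_of_pos_of_lt_pi (by positivity) (by
    rw [div_div, div_lt_iff₀ (by positivity)]
    nlinarith [pi_pos, d.cast_nonneg (α := ℝ)])
  have hbound : ∫ φ in (-π)..π, |φ| * jacksonKernel d φ ≤
      ∫ φ in (-π)..π, (π / (4 * s) * (1 - cos φ) + π * s / 2) * jacksonKernel d φ :=
    intervalIntegral.integral_mono_on (by linarith [pi_pos])
      (Continuous.intervalIntegrable (by fun_prop) _ _)
      (Continuous.intervalIntegrable (by fun_prop) _ _) fun φ hφ =>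
        mul_le_mul_of_nonneg_right (abs_le_pi_div_mul_one_sub_cos_add (abs_le.mpr hφ) hs)
          (jacksonKernel_nonneg d φ)
  have hvalue :
      ∫ φ in (-π)..π, (π / (4 * s) * (1 - cos φ) + π * s / 2) * jacksonKernel d φ = π ^ 2 * s := by
    simp_rw [add_mul, mul_assoc]
    rw [intervalIntegral.integral_add (Continuous.intervalIntegrable (by fun_prop) _ _)
      (Continuous.intervalIntegrable (by fun_prop) _ _), intervalIntegral.integral_const_mul,
      intervalIntegral.integral_const_mul, integral_one_sub_cos_mul_jacksonKernel,
      integral_jacksonKernel, ← hsdef]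
    field_simp
    ring
  calc (1 / π) * ∫ φ in (-π)..π, |φ| * jacksonKernel d φ ≤ (1 / π) * (π ^ 2 * s) := by
        gcongr; exact hbound.trans hvalue.le
    _ ≤ (1 / π) * (π ^ 2 * (π / (d + 2) / 2)) := by gcongr; exact sin_le (by positivity)
    _ = π ^ 2 / (2 * (d + 2)) := by field_simp

/-- `(1/π)·∫_{−π}^{π} |φ|·u_d(φ) dφ ≤ π²/(2(d+2))` for `d ≥ 2`. -/
theorem jacksonKernel_first_moment (d : ℕ) (hd : 2 ≤ d) :
    (1 / π) * ∫ φ in (-π)..π, |φ| * jacksonKernel d φ ≤ π ^ 2 / (2 * (d + 2)) :=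
  jacksonKernel_first_moment_general d
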